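/- arXiv:1404.4096 — 8 statements merged into one kernel-verified Lean document; each statement's English description precedes it below -/
import Mathlib

section
/- A field k has the property that every unit u of k satisfies u^p = 1 (for a prime p) if and only if k = F_2, or k = F_3 with p = 2, or k = F_{p+1} with p a Mersenne prime. -/
/-!
If every unit satisfies `u ^ p = 1`, then `kˣ` lies in the `p`-th roots of unity, so `k` is finite
and `kˣ` is cyclic of order `q - 1`, where `q = |k|`; the condition becomes `q - 1 ∣ p`, i.e.
`q = 2` or `q = p + 1`. In the latter case either `q` is a power of `2`, making `p` a Mersenne
prime, or `q` is odd, forcing `p = 2` and `q = 3`.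
-/

theorem IsCyclic.forall_pow_eq_one_iff_card_dvd {G : Type*} [Group G] [IsCyclic G] {n : ℕ} :
    (∀ g : G, g ^ n = 1) ↔ Nat.card G ∣ n := by
  rw [← Monoid.exponent_dvd_iff_forall_pow_eq_one, IsCyclic.exponent_eq_card]

theorem GroupWithZero.finite_of_finite_units {G₀ : Type*} [GroupWithZero G₀] [Finite G₀ˣ] :
    Finite G₀ := by
  apply Nat.finite_of_card_ne_zero
  have h_card := Nat.card_units G₀
  have h_pos : 0 < Nat.card G₀ˣ := Nat.card_pos
  omega

theorem finite_units_of_forall_pow_eq_one {R : Type*} [CommRing R] [IsDomain R] {n : ℕ}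
    (hn : n ≠ 0) (h : ∀ u : Rˣ, u ^ n = 1) : Finite Rˣ := by
  have : NeZero n := ⟨hn⟩
  exact .of_injective (fun u ↦ (⟨u, (mem_rootsOfUnity n u).2 (h u)⟩ : rootsOfUnity n R))
    fun u v huv ↦ congrArg Subtype.val huv

theorem forall_units_pow_eq_one_iff {k : Type*} [Field k] {n : ℕ} (hn : n ≠ 0) :
    (∀ u : kˣ, u ^ n = 1) ↔ Finite k ∧ Nat.card k - 1 ∣ n := by
  constructor
  · intro h
    have := finite_units_of_forall_pow_eq_one hn h
    have := GroupWithZero.finite_of_finite_units (G₀ := k)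
    rw [← Nat.card_units, ← IsCyclic.forall_pow_eq_one_iff_card_dvd]
    exact ⟨‹_›, h⟩
  · rintro ⟨hfin, hdvd⟩
    rwa [← Nat.card_units, ← IsCyclic.forall_pow_eq_one_iff_card_dvd] at hdvd

theorem Nat.sub_one_dvd_prime_iff {p q : ℕ} (hp : p.Prime) (hq : IsPrimePow q) :
    q - 1 ∣ p ↔ q = 2 ∨ q = 3 ∧ p = 2 ∨ q = p + 1 ∧ ∃ n, p = 2 ^ n - 1 := by
  have hq2 := hq.two_le
  rw [Nat.dvd_prime hp]
  constructor
  · rintro (hq1 | hqp)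
    · omega
    obtain ⟨r, m, hr, -, rfl⟩ := hq
    rcases (Nat.prime_iff.2 hr).eq_two_or_odd' with rfl | hr_odd
    · exact .inr (.inr ⟨by omega, m, by omega⟩)
    · have hp_even : Even p := by
        obtain ⟨c, hc⟩ := hr_odd.pow (n := m)
        exact ⟨c, by omega⟩
      have := hp.even_iff.1 hp_even
      omega
  · omega

theorem Fintype.exists_card_eq_iff_natCard_eq {α : Type*} {m : ℕ} (hm : m ≠ 0) :
    (∃ _ : Fintype α, Fintype.card α = m) ↔ Nat.card α = m := by
  constructor
  · rintro ⟨_, h⟩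
    rwa [Nat.card_eq_fintype_card]
  · intro h
    have := Nat.finite_of_card_ne_zero (h ▸ hm)
    refine ⟨.ofFinite α, ?_⟩
    rwa [Fintype.card_eq_nat_card]

theorem stmt_0 (p : ℕ) (hp : p.Prime) (k : Type*) [Field k] :
    (∀ u : kˣ, u ^ p = 1) ↔
      ((∃ _ : Fintype k, Fintype.card k = 2) ∨
       ((∃ _ : Fintype k, Fintype.card k = 3) ∧ p = 2) ∨
       ((∃ _ : Fintype k, Fintype.card k = p + 1) ∧ ∃ n, p = 2 ^ n - 1)) := by
  simp only [forall_units_pow_eq_one_iff hp.ne_zero,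
    Fintype.exists_card_eq_iff_natCard_eq two_ne_zero,
    Fintype.exists_card_eq_iff_natCard_eq three_ne_zero,
    Fintype.exists_card_eq_iff_natCard_eq p.succ_ne_zero]
  by_cases hfin : Finite k
  · have : Fintype k := .ofFinite k
    have h_primePow : IsPrimePow (Nat.card k) :=
      Nat.card_eq_fintype_card (α := k) ▸ FiniteField.isPrimePow_card k
    simpa only [hfin, true_and] using Nat.sub_one_dvd_prime_iff hp h_primePow
  · have : Infinite k := not_finite_iff_infinite.1 hfin
    simp only [hfin, false_and, false_iff, Nat.card_eq_zero_of_infinite]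
    omega
end

section
/- If G is an elementary abelian p-group and p is a Mersenne prime, then every unit t of the group algebra F_2[G] satisfies t^p = 1. -/
/-!
Over `ZMod p` the Frobenius `x ↦ x ^ p` of a commutative monoid algebra fixes the coefficients and
raises every monoid element to the `p`-th power. For `p = 2` and `G` of exponent dividing `2 ^ n - 1`
this makes `x ↦ x ^ 2 ^ n` the identity of `F₂[G]`, so every unit `t` satisfies `t ^ (2 ^ n - 1) = 1`.
-/

namespace MonoidAlgebra

instance charP {R G : Type*} [CommSemiring R] [Monoid G] (p : ℕ) [CharP R p] :
    CharP (MonoidAlgebra R G) p :=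
  charP_of_injective_algebraMap single_right_injective p

variable {p : ℕ} [Fact p.Prime] {G : Type*} [CommMonoid G]

theorem iterateFrobenius_eq_mapDomainRingHom (n : ℕ) :
    iterateFrobenius (MonoidAlgebra (ZMod p) G) p n =
      mapDomainRingHom (ZMod p) (powMonoidHom (p ^ n)) :=
  ringHom_ext (fun r => by simp [iterateFrobenius_def, single_pow, ZMod.pow_card_pow])
    (fun g => by simp [iterateFrobenius_def, single_pow])

theorem pow_prime_pow_eq_self {n : ℕ} (hG : ∀ g : G, g ^ p ^ n = g)
    (x : MonoidAlgebra (ZMod p) G) : x ^ p ^ n = x := by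
  have hid : powMonoidHom (p ^ n) = MonoidHom.id G := MonoidHom.ext hG
  rw [← iterateFrobenius_def, iterateFrobenius_eq_mapDomainRingHom, hid, mapDomainRingHom_id,
    RingHom.id_apply]

end MonoidAlgebra

theorem stmt_1_general (p : ℕ) (hm : ∃ n, p = 2 ^ n - 1)
    (G : Type*) [CommGroup G] (hG : ∀ g : G, g ≠ 1 → orderOf g = p) :
    ∀ t : (MonoidAlgebra (ZMod 2) G)ˣ, t ^ p = 1 := by
  obtain ⟨n, rfl⟩ := hm
  have hsucc : 2 ^ n - 1 + 1 = 2 ^ n := Nat.sub_add_cancel Nat.one_le_two_pow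
  have hG_pow : ∀ g : G, g ^ 2 ^ n = g := fun g => by
    rcases eq_or_ne g 1 with rfl | hg
    · exact one_pow _
    · rw [← hsucc, pow_succ, ← hG g hg, pow_orderOf_eq_one, one_mul]
  intro t
  have ht : t ^ (2 ^ n - 1) * t = t := Units.ext <| by
    rw [← pow_succ, hsucc, Units.val_pow_eq_pow_val]
    exact MonoidAlgebra.pow_prime_pow_eq_self hG_pow t
  exact mul_eq_right.mp ht

theorem stmt_1 (p : ℕ) (hp : p.Prime) (hm : ∃ n, p = 2 ^ n - 1)
    (G : Type*) [CommGroup G] (hG : ∀ g : G, g ≠ 1 → orderOf g = p) :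
    ∀ t : (MonoidAlgebra (ZMod 2) G)ˣ, t ^ p = 1 :=
  stmt_1_general p hm G hG
end

section
/- Let p be an odd prime and let C_p be the cyclic group of order p. If every unit of the group algebra F_2[C_p] satisfies u^p = 1, then p is a Mersenne prime. -/
/-!
By Maschke's theorem `A = 𝔽₂[C_p]` is semisimple for odd `p`, hence a finite product of finite
fields `A ⧸ m`, and every unit of a factor lifts to a unit of `A`. The generator of `C_p` is a unit
`≠ 1`, so some factor `K` has a unit `≠ 1`. The cyclic group `Kˣ` of order `|K| - 1 = 2ⁿ - 1 > 1`
has exponent dividing `p`, so `2ⁿ - 1 = p`.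
-/

namespace IsArtinianRing

variable {R : Type*} [CommRing R] [IsArtinianRing R] [IsReduced R]

theorem exists_maximalSpectrum_mk_ne {x y : R} (hxy : x ≠ y) :
    ∃ m : MaximalSpectrum R, Ideal.Quotient.mk m.asIdeal x ≠ Ideal.Quotient.mk m.asIdeal y := by
  by_contra! h
  exact hxy ((equivPi R).injective (funext h))

theorem units_map_mk_surjective (m : MaximalSpectrum R) :
    Function.Surjective (Units.map (Ideal.Quotient.mk m.asIdeal : R →* R ⧸ m.asIdeal)) := by
  classical
  intro v
  let x : ∀ n : MaximalSpectrum R, R ⧸ n.asIdeal := Function.update 1 m v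
  have hx : IsUnit x := by
    refine Pi.isUnit_iff.mpr fun n => ?_
    by_cases hn : n = m
    · subst hn; simp [x]
    · simp [x, hn]
  refine ⟨(hx.map (equivPi R).symm).unit, Units.ext ?_⟩
  have hm := congrFun ((equivPi R).apply_symm_apply x) m
  rw [equivPi_apply] at hm
  simpa [x] using hm

end IsArtinianRing

theorem FiniteField.natCard_eq_add_one_of_forall_pow_eq_one {K : Type*} [Field K] [Finite K]
    {p : ℕ} (hp : p.Prime) (hpow : ∀ v : Kˣ, v ^ p = 1) (hK : ∃ v : Kˣ, v ≠ 1) :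
    Nat.card K = p + 1 := by
  have hdvd : Nat.card K - 1 ∣ p := by
    rw [← Nat.card_units, ← IsCyclic.exponent_eq_card]
    exact Monoid.exponent_dvd_of_forall_pow_eq_one hpow
  have hne : Nat.card K - 1 ≠ 1 := by
    rw [← Nat.card_units, ← IsCyclic.exponent_eq_card, Ne, Monoid.exp_eq_one_iff,
      not_subsingleton_iff_nontrivial]
    obtain ⟨v, hv⟩ := hK
    exact ⟨v, 1, hv⟩
  have := Nat.card_pos (α := K)
  rcases hp.eq_one_or_self_of_dvd _ hdvd with h | h <;> omega

theorem stmt_5 (p : ℕ) [Fact p.Prime] (hodd : Odd p)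
    (h : ∀ u : (MonoidAlgebra (ZMod 2) (Multiplicative (ZMod p)))ˣ, u ^ p = 1) :
    ∃ n, p = 2 ^ n - 1 := by
  set A := MonoidAlgebra (ZMod 2) (Multiplicative (ZMod p))
  -- Maschke: with this instance `A` is semisimple, so reduced and artinian.
  have : NeZero (Nat.card (Multiplicative (ZMod p)) : ZMod 2) := by
    rw [Nat.card_eq_fintype_card, Fintype.card_multiplicative, ZMod.card, neZero_iff, Ne,
      ZMod.natCast_eq_zero_iff, ← even_iff_two_dvd, Nat.not_even_iff_odd]
    exact hodd
  have : Finite A := Module.finite_of_finite (ZMod 2)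
  let g : Aˣ := Units.map (MonoidAlgebra.of _ _) (toUnits (Multiplicative.ofAdd 1))
  have hg : (g : A) ≠ 1 := fun hg =>
    one_ne_zero <| ofAdd_eq_one.mp <|
      MonoidAlgebra.of_injective (hg.trans (map_one (MonoidAlgebra.of _ _)).symm)
  obtain ⟨m, hm⟩ := IsArtinianRing.exists_maximalSpectrum_mk_ne hg
  let K := A ⧸ m.asIdeal
  let : Field K := Ideal.Quotient.field m.asIdeal
  have : Finite K := Finite.of_surjective _ Ideal.Quotient.mk_surjective
  have hcardK : Nat.card K = p + 1 := by
    refine FiniteField.natCard_eq_add_one_of_forall_pow_eq_one Fact.out (fun v => ?_)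
      ⟨Units.map (Ideal.Quotient.mk m.asIdeal : A →* K) g, fun hg1 => hm ?_⟩
    · obtain ⟨u, rfl⟩ := IsArtinianRing.units_map_mk_surjective m v
      rw [← map_pow, h, map_one]
    · simpa using congrArg Units.val hg1
  have hcardK_pow : Nat.card K = 2 ^ Module.finrank (ZMod 2) K := by
    rw [Module.natCard_eq_pow_finrank (K := ZMod 2), Nat.card_zmod]
  exact ⟨Module.finrank (ZMod 2) K, by omega⟩
end

section
/- For an odd prime p, the number of units of the group algebra F_2[C_p] is at most 2^{p-1} - 1, with equality if and only if 2 is a primitive root modulo p. -/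
/-!
Sending the generator of `C_p` to `X` identifies `F₂[C_p]` with `F₂[X]/(X^p - 1)`. Since `p` is
odd, `X - 1` and the cyclotomic polynomial `Φ_p` are coprime over `F₂` (`Φ_p(1) = p = 1`), so the
Chinese remainder theorem gives `F₂[C_p] ≅ F₂ × F₂[X]/(Φ_p)`, and the units of the group algebra
are in bijection with those of `B = F₂[X]/(Φ_p)`, a ring with `2^(p-1)` elements. Hence there are
at most `2^(p-1) - 1` units, with equality iff `B` is a field, i.e. iff `Φ_p` is irreducible
over `F₂`. Every irreducible factor of `Φ_p` over `F₂` has degree the order of `2` modulo `p`,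
so `Φ_p` is irreducible iff that order is `deg Φ_p = p - 1`.
-/

open Polynomial

section UnitsOfFinite

variable {M₀ : Type*} [MonoidWithZero M₀] [Nontrivial M₀] [Finite M₀]

theorem natCard_units_le_card_sub_one : Nat.card M₀ˣ ≤ Nat.card M₀ - 1 :=
  Nat.le_sub_one_of_lt (natCard_units_lt M₀)

theorem natCard_units_eq_card_sub_one_iff :
    Nat.card M₀ˣ = Nat.card M₀ - 1 ↔ ∀ a : M₀, a ≠ 0 → IsUnit a := by
  classical
  have := Fintype.ofFinite M₀
  let f : M₀ˣ → {a : M₀ // a ≠ 0} := fun u ↦ ⟨u, u.ne_zero⟩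
  have hf : Function.Injective f := fun u v h ↦ Units.ext (congrArg Subtype.val h)
  have hcard : Nat.card {a : M₀ // a ≠ 0} = Nat.card M₀ - 1 := by
    rw [Nat.card_eq_fintype_card, Nat.card_eq_fintype_card]
    exact Set.card_ne_eq 0
  rw [← hcard]
  constructor
  · intro h a ha
    obtain ⟨u, hu⟩ := (hf.bijective_of_nat_card_le h.ge).2 ⟨a, ha⟩
    exact ⟨u, congrArg Subtype.val hu⟩
  · exact fun h ↦ Nat.card_eq_of_bijective f ⟨hf, fun a ↦ ⟨(h a a.2).unit, rfl⟩⟩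

end UnitsOfFinite

namespace AdjoinRoot

theorem natCard_eq_pow_natDegree {K : Type*} [Field K] {f : K[X]} (hf : f ≠ 0) :
    Nat.card (AdjoinRoot f) = Nat.card K ^ f.natDegree := by
  have := (powerBasis hf).finite
  rw [Module.natCard_eq_pow_finrank (K := K), (powerBasis hf).finrank, powerBasis_dim]

theorem forall_isUnit_iff_irreducible {K : Type*} [Field K] {f : K[X]} (hf : 0 < f.natDegree) :
    (∀ a : AdjoinRoot f, a ≠ 0 → IsUnit a) ↔ Irreducible f := by
  have hf0 : f ≠ 0 := ne_zero_of_natDegree_gt hf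
  have : Nontrivial (AdjoinRoot f) :=
    AdjoinRoot.nontrivial f (by rw [degree_eq_natDegree hf0]; exact_mod_cast hf.ne')
  rw [Ideal.irreducible_iff_isMaximal_span_singleton hf0,
    Ideal.Quotient.maximal_ideal_iff_isField_quotient]
  refine ⟨fun h ↦ ⟨exists_pair_ne (AdjoinRoot f), mul_comm, fun ha ↦ (h _ ha).exists_right_inv⟩,
    fun h a ha ↦ ?_⟩
  obtain ⟨b, hb⟩ := h.mul_inv_cancel ha
  exact .of_mul_eq_one b hb

theorem root_X_pow_sub_one_pow (k : Type*) [CommRing k] (n : ℕ) :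
    root (X ^ n - 1 : k[X]) ^ n = 1 := by
  have h := aeval_eq (f := (X ^ n - 1 : k[X])) (X ^ n - 1)
  rwa [mk_self, map_sub, map_pow, aeval_X, map_one, sub_eq_zero] at h

noncomputable def mulEquivProdOfIsCoprime {R : Type*} [CommRing R] {f g : R[X]}
    (h : IsCoprime f g) : AdjoinRoot (f * g) ≃+* AdjoinRoot f × AdjoinRoot g :=
  (Ideal.quotEquivOfEq (Ideal.span_singleton_mul_span_singleton f g).symm).trans
    (Ideal.quotientMulEquivQuotientProd _ _ ((Ideal.isCoprime_span_singleton_iff f g).mpr h))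

end AdjoinRoot

def zmodPowersHom {M : Type*} [Monoid M] (n : ℕ) [NeZero n] (x : M) (hx : x ^ n = 1) :
    Multiplicative (ZMod n) →* M where
  toFun a := x ^ a.toAdd.val
  map_one' := by simp
  map_mul' a b := by rw [toAdd_mul, ZMod.val_add, ← pow_add, ← pow_eq_pow_mod _ hx]

theorem zmodPowersHom_ofAdd {M : Type*} [Monoid M] (n : ℕ) [NeZero n] (x : M) (hx : x ^ n = 1)
    (a : ZMod n) : zmodPowersHom n x hx (.ofAdd a) = x ^ a.val := rfl

namespace MonoidAlgebra

variable (k : Type*) [CommRing k] (n : ℕ)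

theorem of_ofAdd_one_pow : of k _ (Multiplicative.ofAdd (1 : ZMod n)) ^ n = 1 := by
  rw [← map_pow, ← ofAdd_nsmul, nsmul_one, ZMod.natCast_self, ofAdd_zero, map_one]

variable [NeZero n]

theorem of_ofAdd_one_pow_val (a : ZMod n) :
    of k _ (Multiplicative.ofAdd (1 : ZMod n)) ^ a.val = of k _ (Multiplicative.ofAdd a) := by
  rw [← map_pow, ← ofAdd_nsmul, nsmul_one, ZMod.natCast_val, ZMod.cast_id]

open AdjoinRoot in
noncomputable def cyclicAlgEquivAdjoinRoot :
    MonoidAlgebra k (Multiplicative (ZMod n)) ≃ₐ[k] AdjoinRoot (X ^ n - 1 : k[X]) :=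
  AlgEquiv.ofAlgHom
    (lift k _ _ (zmodPowersHom n _ (root_X_pow_sub_one_pow k n)))
    (liftAlgHom _ (Algebra.ofId _ _) (of k _ (Multiplicative.ofAdd 1)) (by
      rw [eval₂_sub, eval₂_X_pow, eval₂_one, of_ofAdd_one_pow, sub_self]))
    (AdjoinRoot.algHom_ext (by
      rw [AlgHom.comp_apply, liftAlgHom_root, lift_of, zmodPowersHom_ofAdd,
        ZMod.val_one_eq_one_mod, ← pow_eq_pow_mod _ (root_X_pow_sub_one_pow k n), pow_one,
        AlgHom.id_apply]))
    (MonoidAlgebra.algHom_ext (fun a ↦ by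
      rw [AlgHom.comp_apply, lift_single, one_smul, ← ofAdd_toAdd a, zmodPowersHom_ofAdd,
        map_pow, liftAlgHom_root, of_ofAdd_one_pow_val]
      rfl) (Subsingleton.elim _ _))

end MonoidAlgebra

theorem Polynomial.isCoprime_X_sub_one_cyclotomic_prime {K : Type*} [Field K] {p : ℕ}
    [Fact p.Prime] (hp : (p : K) ≠ 0) : IsCoprime (X - C 1 : K[X]) (cyclotomic p K) :=
  (irreducible_X_sub_C 1).coprime_iff_not_dvd.mpr <| by
    rwa [dvd_iff_isRoot, IsRoot, eval_one_cyclotomic_prime]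

theorem MonoidAlgebra.natCard_units_cyclic_prime {K : Type*} [Field K] {p : ℕ} [Fact p.Prime]
    (hp : (p : K) ≠ 0) :
    Nat.card (MonoidAlgebra K (Multiplicative (ZMod p)))ˣ =
      Nat.card Kˣ * Nat.card (AdjoinRoot (cyclotomic p K))ˣ := by
  rw [Nat.card_congr (Units.mapEquiv (cyclicAlgEquivAdjoinRoot K p).toMulEquiv).toEquiv,
    ← cyclotomic_prime_mul_X_sub_one, mul_comm, ← C_1,
    Nat.card_congr (Units.mapEquiv (AdjoinRoot.mulEquivProdOfIsCoprime
      (isCoprime_X_sub_one_cyclotomic_prime hp)).toMulEquiv).toEquiv,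
    Nat.card_congr MulEquiv.prodUnits.toEquiv, Nat.card_prod]
  congr 1
  exact Nat.card_congr (Units.mapEquiv (quotientSpanXSubCAlgEquiv (1 : K)).toMulEquiv).toEquiv

theorem ZMod.irreducible_cyclotomic_iff_orderOf {ℓ n : ℕ} [Fact ℓ.Prime] (hℓn : ¬ℓ ∣ n) :
    Irreducible (cyclotomic n (ZMod ℓ)) ↔ orderOf (ℓ : ZMod n) = n.totient := by
  have hcop : ℓ.Coprime n := (Fact.out : ℓ.Prime).coprime_iff_not_dvd.mpr hℓn
  have horder : orderOf (unitOfCoprime ℓ hcop) = orderOf (ℓ : ZMod n) := by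
    rw [← orderOf_units, coe_unitOfCoprime]
  rw [← horder, ← natDegree_cyclotomic n (ZMod ℓ)]
  refine ⟨fun hirr ↦ ?_,
    fun hdeg ↦ irreducible_of_dvd_cyclotomic_of_natDegree hℓn dvd_rfl hdeg.symm⟩
  simpa using (natDegree_of_dvd_cyclotomic_of_irreducible (p := ℓ) (f := 1) (by simp) hcop
    dvd_rfl hirr).symm

theorem stmt_8 (p : ℕ) [Fact p.Prime] (hodd : Odd p) :
    Nat.card (MonoidAlgebra (ZMod 2) (Multiplicative (ZMod p)))ˣ ≤ 2 ^ (p - 1) - 1 ∧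
    (Nat.card (MonoidAlgebra (ZMod 2) (Multiplicative (ZMod p)))ˣ = 2 ^ (p - 1) - 1 ↔
      orderOf (2 : ZMod p) = p - 1) := by
  have hp : p.Prime := Fact.out
  have hp1 : 0 < p - 1 := Nat.sub_pos_of_lt hp.one_lt
  have hdeg : (cyclotomic p (ZMod 2)).natDegree = p - 1 := by
    rw [natDegree_cyclotomic, Nat.totient_prime hp]
  have hcard : Nat.card (AdjoinRoot (cyclotomic p (ZMod 2))) = 2 ^ (p - 1) := by
    rw [AdjoinRoot.natCard_eq_pow_natDegree (cyclotomic_ne_zero p _), Nat.card_zmod, hdeg]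
  have : Finite (AdjoinRoot (cyclotomic p (ZMod 2))) :=
    Nat.finite_of_card_ne_zero (by rw [hcard]; positivity)
  have : Nontrivial (AdjoinRoot (cyclotomic p (ZMod 2))) := Finite.one_lt_card_iff_nontrivial.mp
    (by rw [hcard]; exact Nat.one_lt_two_pow hp1.ne')
  rw [MonoidAlgebra.natCard_units_cyclic_prime (ZMod.natCast_ne_zero_iff_odd.mpr hodd),
    Nat.card_unique, one_mul, ← hcard]
  refine ⟨natCard_units_le_card_sub_one, ?_⟩
  rw [natCard_units_eq_card_sub_one_iff,
    AdjoinRoot.forall_isUnit_iff_irreducible (hdeg ▸ hp1),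
    ZMod.irreducible_cyclotomic_iff_orderOf hodd.not_two_dvd_nat, Nat.totient_prime hp,
    Nat.cast_ofNat]
end

section
/- Let p be an odd prime. The number of units u in F_2[C_p] satisfying u^p = 1 and u ≠ 1 equals p^{(p-1)/d} - 1, where d is the multiplicative order of 2 mod p. Consequently, 2 is a primitive root mod p if and only if the only units of order p in F_2[C_p] are the non-identity elements of C_p. -/
/-!
`𝔽₂[C_p] ≅ 𝔽₂[X]/(X^p - 1) ≅ 𝔽₂ × 𝔽₂[X]/(Φ_p)`, and by the Chinese remainder theorem
`𝔽₂[X]/(Φ_p)` is a product of fields, one for each of the `(p - 1)/d` irreducible factors of `Φ_p`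
over `𝔽₂`. The image of `X` is a primitive `p`-th root of unity in each of these fields, so each
has exactly `p` of the `p`-th roots of unity, while `𝔽₂` has only `1`. Hence `𝔽₂[C_p]`
has `p ^ ((p - 1)/d)` of them. The `p` elements of `C_p` are among them, and exhaust them exactly
when `p ^ ((p - 1)/d) = p`, i.e. when `d = p - 1`.
-/

open Polynomial UniqueFactorizationMonoid

section RootsOfUnity

variable {M N : Type*} [CommMonoid M] [CommMonoid N] (n : ℕ)

lemma card_rootsOfUnity_congr (e : M ≃* N) :
    Nat.card (rootsOfUnity n M) = Nat.card (rootsOfUnity n N) :=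
  Nat.card_congr (e.restrictRootsOfUnity n).toEquiv

lemma card_rootsOfUnity_prod :
    Nat.card (rootsOfUnity n (M × N)) =
      Nat.card (rootsOfUnity n M) * Nat.card (rootsOfUnity n N) := by
  rw [← Nat.card_prod]
  refine Nat.card_congr <| (MulEquiv.prodUnits.toEquiv.subtypeEquiv fun u => ?_).trans
    Equiv.subtypeProdEquivProd
  rw [mem_rootsOfUnity, ← MulEquiv.prodUnits.map_eq_one_iff, map_pow, Prod.ext_iff]
  rfl

lemma card_rootsOfUnity_pi {ι : Type*} [Fintype ι] (M : ι → Type*) [∀ i, CommMonoid (M i)] :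
    Nat.card (rootsOfUnity n (Π i, M i)) = ∏ i, Nat.card (rootsOfUnity n (M i)) := by
  rw [← Nat.card_pi]
  refine Nat.card_congr <| (MulEquiv.piUnits.toEquiv.subtypeEquiv fun u => ?_).trans
    Equiv.subtypePiEquivPi
  rw [mem_rootsOfUnity, ← MulEquiv.piUnits.map_eq_one_iff, map_pow, funext_iff]
  rfl

lemma card_pow_eq_one_and_ne_one [Finite (rootsOfUnity n M)] :
    Nat.card {u : Mˣ // u ^ n = 1 ∧ u ≠ 1} = Nat.card (rootsOfUnity n M) - 1 := by
  have hset : {u : Mˣ | u ^ n = 1 ∧ u ≠ 1} = (rootsOfUnity n M : Set Mˣ) \ {1} := rfl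
  rw [← Set.coe_ofPred, hset, Nat.card_coe_set_eq, Set.ncard_sdiff_singleton_of_mem (one_mem _),
    ← Nat.card_coe_set_eq]
  rfl

end RootsOfUnity

lemma Polynomial.isCoprime_of_mem_normalizedFactors {K : Type*} [Field K] [DecidableEq K]
    {f a b : K[X]}
    (ha : a ∈ normalizedFactors f) (hb : b ∈ normalizedFactors f) (hab : a ≠ b) :
    IsCoprime a b := by
  have ha' := irreducible_of_normalized_factor a ha
  refine ha'.coprime_iff_not_dvd.mpr fun hdvd => hab ?_
  exact mem_normalizedFactors_eq_of_associated ha hb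
    (ha'.associated_of_dvd (irreducible_of_normalized_factor b hb) hdvd)

namespace AdjoinRoot

noncomputable def mulEquivProd {R : Type*} [CommRing R] {f g : R[X]} (h : IsCoprime f g) :
    AdjoinRoot (f * g) ≃+* AdjoinRoot f × AdjoinRoot g :=
  (Ideal.quotEquivOfEq (Ideal.span_singleton_mul_span_singleton f g).symm).trans
    (Ideal.quotientMulEquivQuotientProd _ _ ((Ideal.isCoprime_span_singleton_iff f g).mpr h))

noncomputable def equivPiNormalizedFactors {K : Type*} [Field K] [DecidableEq K] {f : K[X]}
    (hf : Squarefree f) :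
    AdjoinRoot f ≃+* Π g : (normalizedFactors f).toFinset, AdjoinRoot (g : K[X]) :=
  have hcop : Pairwise fun a b : (normalizedFactors f).toFinset => IsCoprime (a : K[X]) b :=
    fun a b hab => isCoprime_of_mem_normalizedFactors (Multiset.mem_toFinset.mp a.2)
      (Multiset.mem_toFinset.mp b.2) (Subtype.coe_ne_coe.mpr hab)
  have hinf : ⨅ g : (normalizedFactors f).toFinset, Ideal.span {(g : K[X])} = Ideal.span {f} := by
    rw [Ideal.iInf_span_singleton fun a b hab => hcop hab, Ideal.span_singleton_eq_span_singleton,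
      Finset.prod_coe_sort (normalizedFactors f).toFinset (fun g => g),
      Finset.prod_eq_multiset_prod, Multiset.toFinset_val,
      Multiset.dedup_eq_self.mpr ((squarefree_iff_nodup_normalizedFactors hf.ne_zero).mp hf),
      Multiset.map_id']
    exact prod_normalizedFactors hf.ne_zero
  (Ideal.quotEquivOfEq hinf.symm).trans (Ideal.quotientInfRingEquivPiQuotient _ fun a b hab =>
    (Ideal.isCoprime_span_singleton_iff _ _).mpr (hcop hab))

end AdjoinRoot

@[simps]
def zmodPowHom {M : Type*} [Monoid M] {n : ℕ} [NeZero n] {x : M} (hx : x ^ n = 1) :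
    Multiplicative (ZMod n) →* M where
  toFun k := x ^ k.toAdd.val
  map_one' := by simp
  map_mul' a b := by rw [toAdd_mul, ZMod.val_add, ← pow_eq_pow_mod _ hx, pow_add]

noncomputable def MonoidAlgebra.adjoinRootEquiv (K : Type*) [CommRing K] (n : ℕ) [NeZero n] :
    AdjoinRoot (X ^ n - 1 : K[X]) ≃ₐ[K] MonoidAlgebra K (Multiplicative (ZMod n)) :=
  have hgen : of K _ (Multiplicative.ofAdd (1 : ZMod n)) ^ n = 1 := by
    rw [← map_pow, ← ofAdd_nsmul, nsmul_one, ZMod.natCast_self, ofAdd_zero, map_one]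
  have hroot : AdjoinRoot.root (X ^ n - 1 : K[X]) ^ n = 1 := by
    have h := AdjoinRoot.eval₂_root (X ^ n - 1 : K[X])
    rwa [eval₂_sub, eval₂_X_pow, eval₂_one, sub_eq_zero] at h
  AlgEquiv.ofAlgHom
    (AdjoinRoot.liftAlgHom _ (Algebra.ofId _ _) (of K _ (Multiplicative.ofAdd 1))
      (by rw [eval₂_sub, eval₂_X_pow, eval₂_one, hgen, sub_self]))
    (MonoidAlgebra.lift K _ _ (zmodPowHom hroot))
    ((MonoidAlgebra.lift K _ _).symm.injective <| MonoidHom.ext fun g => by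
      rw [MonoidAlgebra.lift_symm_apply, MonoidAlgebra.lift_symm_apply, ← MonoidAlgebra.of_apply,
        AlgHom.comp_apply, MonoidAlgebra.lift_of, zmodPowHom_apply, map_pow,
        AdjoinRoot.liftAlgHom_root, ← map_pow, ← ofAdd_nsmul, nsmul_one, ZMod.natCast_zmod_val,
        ofAdd_toAdd, AlgHom.id_apply])
    (AdjoinRoot.algHom_ext <| by
      rw [AlgHom.comp_apply, AdjoinRoot.liftAlgHom_root, MonoidAlgebra.lift_of, zmodPowHom_apply,
        toAdd_ofAdd, ZMod.val_one_eq_one_mod, ← pow_eq_pow_mod _ hroot, pow_one, AlgHom.id_apply])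

lemma card_rootsOfUnity_adjoinRoot_of_dvd_cyclotomic {K : Type*} [Field K] {n : ℕ}
    [NeZero (n : K)] {f : K[X]} (hf : Irreducible f) (hdvd : f ∣ cyclotomic n K) :
    Nat.card (rootsOfUnity n (AdjoinRoot f)) = n := by
  have := Fact.mk hf
  have : NeZero n := NeZero.of_neZero_natCast K
  have : NeZero (n : AdjoinRoot f) := ⟨by
    rw [← map_natCast (algebraMap K (AdjoinRoot f))]
    exact (_root_.map_ne_zero _).mpr (NeZero.ne _)⟩
  refine (isRoot_cyclotomic_iff.mp ?_).card_rootsOfUnity (ζ := AdjoinRoot.root f)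
  simpa using (AdjoinRoot.isRoot_root f).dvd (map_dvd (algebraMap K (AdjoinRoot f)) hdvd)

lemma card_rootsOfUnity_adjoinRoot_cyclotomic (ℓ : ℕ) [Fact ℓ.Prime] {n : ℕ}
    (hn : ℓ.Coprime n) :
    Nat.card (rootsOfUnity n (AdjoinRoot (cyclotomic n (ZMod ℓ)))) =
      n ^ (n.totient / orderOf (ℓ : ZMod n)) := by
  have : NeZero (n : ZMod ℓ) := ⟨by
    rw [Ne, ZMod.natCast_eq_zero_iff]
    exact (Nat.Prime.coprime_iff_not_dvd Fact.out).mp hn⟩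
  rw [card_rootsOfUnity_congr n
      (AdjoinRoot.equivPiNormalizedFactors (squarefree_cyclotomic n _)).toMulEquiv,
    card_rootsOfUnity_pi, Finset.prod_congr rfl fun g _ =>
      card_rootsOfUnity_adjoinRoot_of_dvd_cyclotomic
        (irreducible_of_normalized_factor _ (Multiset.mem_toFinset.mp g.2))
        (dvd_of_mem_normalizedFactors (Multiset.mem_toFinset.mp g.2)),
    Finset.prod_const, Finset.card_univ, Fintype.card_coe,
    normalizedFactors_cyclotomic_card (p := ℓ) (f := 1) (by simp) (by simpa using hn),
    ← orderOf_units, ZMod.coe_unitOfCoprime, pow_one]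

lemma card_rootsOfUnity_monoidAlgebra_zmod_two (p : ℕ) [Fact p.Prime] (hodd : Odd p) :
    Nat.card (rootsOfUnity p (MonoidAlgebra (ZMod 2) (Multiplicative (ZMod p)))) =
      p ^ ((p - 1) / orderOf (2 : ZMod p)) := by
  have hcop : IsCoprime (cyclotomic p (ZMod 2)) (X - C 1) := by
    refine ((irreducible_X_sub_C 1).coprime_iff_not_dvd.mpr ?_).symm
    rw [dvd_iff_isRoot, IsRoot, eval_one_cyclotomic_prime]
    exact ZMod.natCast_ne_zero_iff_odd.mpr hodd
  have hX : cyclotomic p (ZMod 2) * (X - C 1) = X ^ p - 1 := by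
    rw [C_1, cyclotomic_prime_mul_X_sub_one]
  have hcard_X_sub_one : Nat.card (rootsOfUnity p (AdjoinRoot (X - C 1 : (ZMod 2)[X]))) = 1 := by
    have e : AdjoinRoot (X - C 1 : (ZMod 2)[X]) ≃ₐ[ZMod 2] ZMod 2 := quotientSpanXSubCAlgEquiv 1
    rw [card_rootsOfUnity_congr p e.toMulEquiv]
    exact Nat.card_eq_one_iff_unique.mpr ⟨inferInstance, inferInstance⟩
  rw [← card_rootsOfUnity_congr p (MonoidAlgebra.adjoinRootEquiv (ZMod 2) p).toMulEquiv, ← hX,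
    card_rootsOfUnity_congr p (AdjoinRoot.mulEquivProd hcop).toMulEquiv, card_rootsOfUnity_prod,
    hcard_X_sub_one, mul_one, card_rootsOfUnity_adjoinRoot_cyclotomic 2 (Nat.coprime_two_left.mpr hodd),
    Nat.totient_prime Fact.out, Nat.cast_ofNat]

lemma MonoidAlgebra.card_rootsOfUnity_eq_iff {k G : Type*} [CommRing k] [Nontrivial k]
    [CommGroup G] [Finite G] {n : ℕ} (hG : Nat.card G = n) :
    Nat.card (rootsOfUnity n (MonoidAlgebra k G)) = n ↔
      ∀ u : (MonoidAlgebra k G)ˣ, u ^ n = 1 → u ≠ 1 →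
        ∃ g : G, g ≠ 1 ∧ (u : MonoidAlgebra k G) = of k G g := by
  subst hG
  let ι : G →* rootsOfUnity (Nat.card G) (MonoidAlgebra k G) :=
    ((Units.map (of k G)).comp toUnits.toMonoidHom).codRestrict _ fun g => by
      rw [mem_rootsOfUnity, ← map_pow, pow_card_eq_one', map_one]
  have hι (g : G) : ((ι g : (MonoidAlgebra k G)ˣ) : MonoidAlgebra k G) = of k G g := rfl
  have hinj : Function.Injective ι := fun a b h => of_injective (by rw [← hι, ← hι, h])
  constructor
  · intro hcard u hu hu1
    have : Finite (rootsOfUnity (Nat.card G) (MonoidAlgebra k G)) :=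
      Nat.finite_of_card_ne_zero (by rw [hcard]; exact Nat.card_pos.ne')
    obtain ⟨g, hg⟩ := (hinj.bijective_of_nat_card_le hcard.le).2 ⟨u, hu⟩
    refine ⟨g, fun h1 => hu1 ?_, by rw [← hι, hg]⟩
    rw [h1, map_one] at hg
    exact (congrArg Subtype.val hg).symm
  · intro h
    refine (Nat.card_eq_of_bijective ι ⟨hinj, fun u => ?_⟩).symm
    by_cases hu1 : u = 1
    · exact ⟨1, by rw [hu1, map_one]⟩
    obtain ⟨g, -, hg⟩ := h u u.2 (fun h1 => hu1 (Subtype.ext h1))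
    exact ⟨g, Subtype.ext (Units.ext (by rw [hι, hg]))⟩

theorem stmt_11 (p : ℕ) [Fact p.Prime] (hodd : Odd p) :
    Nat.card {u : (MonoidAlgebra (ZMod 2) (Multiplicative (ZMod p)))ˣ // u ^ p = 1 ∧ u ≠ 1} =
      p ^ ((p - 1) / orderOf (2 : ZMod p)) - 1 ∧
    (orderOf (2 : ZMod p) = p - 1 ↔
      ∀ u : (MonoidAlgebra (ZMod 2) (Multiplicative (ZMod p)))ˣ, u ^ p = 1 → u ≠ 1 →
        ∃ g : Multiplicative (ZMod p), g ≠ 1 ∧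
          (u : MonoidAlgebra (ZMod 2) (Multiplicative (ZMod p))) =
            MonoidAlgebra.of (ZMod 2) (Multiplicative (ZMod p)) g) := by
  have hp : p.Prime := Fact.out
  have hcard := card_rootsOfUnity_monoidAlgebra_zmod_two p hodd
  have : Finite (rootsOfUnity p (MonoidAlgebra (ZMod 2) (Multiplicative (ZMod p)))) :=
    Nat.finite_of_card_ne_zero (by rw [hcard]; exact pow_ne_zero _ hp.ne_zero)
  have hG : Nat.card (Multiplicative (ZMod p)) = p := by
    rw [Nat.card_congr Multiplicative.toAdd, Nat.card_zmod]
  have hd : orderOf (2 : ZMod p) ∣ p - 1 := by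
    refine ZMod.orderOf_dvd_card_sub_one ?_
    rw [← Nat.cast_ofNat, Ne, ZMod.natCast_eq_zero_iff, Nat.prime_dvd_prime_iff_eq hp Nat.prime_two]
    rintro rfl
    exact Nat.not_even_iff_odd.mpr hodd even_two
  refine ⟨by rw [card_pow_eq_one_and_ne_one, hcard], ?_⟩
  rw [← MonoidAlgebra.card_rootsOfUnity_eq_iff hG, hcard, Nat.pow_eq_self_iff hp.one_lt]
  exact ⟨fun h => by rw [h, Nat.div_self (Nat.sub_pos_of_lt hp.one_lt)],
    Nat.eq_of_dvd_of_div_eq_one hd⟩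
end

section
/- Let p be an odd prime and n a positive integer coprime to p. The unit x^n + 1 in F_2[x]/(Φ_p(x)) satisfies (x^n + 1)^p = 1 if and only if p is a Mersenne prime. -/
/-!
Write `y = x ^ n`. As `n` is invertible mod `p`, the powers of `y` run through those of `x`, so
`∑_{j<p} y ^ j = Φ_p(x) = 0`; this makes `y + 1` a unit. If `p = 2 ^ m - 1`, Frobenius gives
`(y + 1) ^ (p + 1) = y ^ (p + 1) + 1 = y + 1`, hence `(y + 1) ^ p = 1`.

Conversely, specialising `x` to the primitive `p`-th roots of unity `θ` of a cyclotomic field, each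
of which is `θ' ^ n` for another primitive `θ'`, gives `(μ + 1) ^ p = 1` for every `p`-th root of
unity `μ ≠ 1`. Then `{0} ∪ μ_p`, the solution set of `z ^ (p + 1) = z`, is closed under addition
(`a + b = a (1 + b / a)`), hence is a subfield with `p + 1` elements, and `p + 1` is a power of `2`.
-/

open Polynomial Finset

theorem sum_range_pow_mul_eq_of_coprime {A : Type*} [Semiring A] {x : A} {p n : ℕ}
    (hx : x ^ p = 1) (hn : n.Coprime p) :
    ∑ j ∈ range p, x ^ (n * j) = ∑ j ∈ range p, x ^ j := by
  rcases p.eq_zero_or_pos with rfl | hp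
  · simp
  have : NeZero p := ⟨hp.ne'⟩
  let u := ZMod.unitOfCoprime n hn
  refine sum_nbij' (fun j ↦ ((u : ZMod p) * j).val) (fun j ↦ ((u⁻¹ : (ZMod p)ˣ) * j : ZMod p).val)
    (fun _ _ ↦ mem_range.mpr (ZMod.val_lt _)) (fun _ _ ↦ mem_range.mpr (ZMod.val_lt _))
    (fun j hj ↦ ?_) (fun j hj ↦ ?_) (fun j _ ↦ ?_)
  · simp [ZMod.val_cast_of_lt (mem_range.mp hj)]
  · simp [ZMod.val_cast_of_lt (mem_range.mp hj)]
  · simp only [u, ZMod.coe_unitOfCoprime, ← Nat.cast_mul, ZMod.val_natCast]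
    exact pow_eq_pow_mod _ hx

theorem pow_eq_one_of_geom_sum_eq_zero {A : Type*} [Ring A] {x : A} {p : ℕ}
    (hx : ∑ j ∈ range p, x ^ j = 0) : x ^ p = 1 := by
  rw [← sub_eq_zero, ← geom_sum_mul, hx, zero_mul]

theorem add_one_mul_sum_range_pow_two_mul {A : Type*} [CommRing A] (y : A) (q : ℕ) :
    (y + 1) * ∑ i ∈ range q, y ^ (2 * i) = ∑ j ∈ range (2 * q), y ^ j := by
  induction q with
  | zero => simp
  | succ q ih =>
    rw [sum_range_succ, mul_add, ih, Nat.mul_succ, sum_range_succ, sum_range_succ]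
    ring

theorem isUnit_add_one_of_geom_sum_eq_zero {A : Type*} [CommRing A] {y : A} {p : ℕ}
    (hp : Odd p) (hy : ∑ j ∈ range p, y ^ j = 0) : IsUnit (y + 1) := by
  obtain ⟨q, rfl⟩ := hp
  refine IsUnit.of_mul_eq_one (∑ i ∈ range (q + 1), y ^ (2 * i)) ?_
  rw [add_one_mul_sum_range_pow_two_mul, show 2 * (q + 1) = 2 * q + 1 + 1 by ring,
    sum_range_succ, hy, zero_add, pow_eq_one_of_geom_sum_eq_zero hy]

theorem add_one_pow_eq_one_of_geom_sum_eq_zero {A : Type*} [CommRing A] [CharP A 2] {x : A}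
    {p n m : ℕ} (hx : ∑ j ∈ range p, x ^ j = 0) (hn : n.Coprime p) (hp : p = 2 ^ m - 1) :
    (x ^ n + 1) ^ p = 1 := by
  have hxp := pow_eq_one_of_geom_sum_eq_zero hx
  have hy : ∑ j ∈ range p, (x ^ n) ^ j = 0 := by
    simp_rw [← pow_mul]
    rw [sum_range_pow_mul_eq_of_coprime hxp hn, hx]
  have hyp : (x ^ n) ^ p = 1 := pow_eq_one_of_geom_sum_eq_zero hy
  rcases m with _ | m
  · simp [hp]
  have h2 : 2 ^ (m + 1) = p + 1 := by have := Nat.one_le_two_pow (n := m + 1); omega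
  have hodd : Odd p := by rw [pow_succ] at h2; rw [Nat.odd_iff]; omega
  have hfrob : (x ^ n + 1) ^ (p + 1) = x ^ n + 1 := by
    rw [← h2, add_pow_char_pow, one_pow, h2, pow_succ, hyp, one_mul]
  refine (isUnit_add_one_of_geom_sum_eq_zero hodd hy).mul_left_cancel ?_
  rw [← pow_succ', hfrob, mul_one]

theorem pow_succ_eq_self_iff {M₀ : Type*} [MonoidWithZero M₀] [IsLeftCancelMulZero M₀] {z : M₀}
    {p : ℕ} :
    z ^ (p + 1) = z ↔ z = 0 ∨ z ^ p = 1 := by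
  rw [pow_succ', ← mul_eq_mul_left_iff.trans or_comm, mul_one]

section CharTwo

variable {K : Type*} [Field K] [CharP K 2] {p : ℕ}

theorem add_pow_succ_eq_self (h : ∀ μ : K, μ ^ p = 1 → μ ≠ 1 → (μ + 1) ^ p = 1) {a b : K}
    (ha : a ^ (p + 1) = a) (hb : b ^ (p + 1) = b) : (a + b) ^ (p + 1) = a + b := by
  rcases eq_or_ne a 0 with rfl | ha0
  · rw [zero_add, hb]
  rcases eq_or_ne b 0 with rfl | hb0
  · rw [add_zero, ha]
  rcases eq_or_ne a b with rfl | hab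
  · rw [CharTwo.add_self_eq_zero, zero_pow p.succ_ne_zero]
  have hap := (pow_succ_eq_self_iff.mp ha).resolve_left ha0
  have hbp := (pow_succ_eq_self_iff.mp hb).resolve_left hb0
  have hμ : (b / a) ^ p = 1 := by rw [div_pow, hap, hbp, div_one]
  have hμ1 : b / a ≠ 1 := by rwa [Ne, div_eq_one_iff_eq ha0, eq_comm]
  have hsplit : a + b = a * (b / a + 1) := by field_simp; ring
  rw [hsplit, mul_pow, ha, pow_succ, h _ hμ hμ1, one_mul]

def powSuccFixedSubfield (h : ∀ μ : K, μ ^ p = 1 → μ ≠ 1 → (μ + 1) ^ p = 1) : Subfield K where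
  carrier := {z | z ^ (p + 1) = z}
  mul_mem' {a b} ha hb := by simp_all [mul_pow]
  one_mem' := one_pow _
  add_mem' := add_pow_succ_eq_self h
  zero_mem' := zero_pow p.succ_ne_zero
  neg_mem' {a} ha := by simpa only [Set.mem_ofPred_eq, CharTwo.neg_eq] using ha
  inv_mem' a ha := by simp_all [inv_pow]

theorem card_powSuccFixedSubfield (h : ∀ μ : K, μ ^ p = 1 → μ ≠ 1 → (μ + 1) ^ p = 1) {ζ : K}
    (hζ : IsPrimitiveRoot ζ p) (hp : 0 < p) : Nat.card (powSuccFixedSubfield h) = p + 1 := by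
  classical
  have hS : (powSuccFixedSubfield h : Set K) = ↑(insert 0 (nthRootsFinset p (1 : K))) := by
    ext z
    simp [powSuccFixedSubfield, pow_succ_eq_self_iff, mem_nthRootsFinset hp]
  have h0 : (0 : K) ∉ nthRootsFinset p (1 : K) := by simp [mem_nthRootsFinset hp, hp.ne']
  rw [← SetLike.coe_sort_coe, Nat.card_coe_set_eq, hS, Set.ncard_coe_finset,
    card_insert_of_notMem h0, hζ.card_nthRootsFinset]

theorem exists_eq_two_pow_sub_one_of_add_one_pow_eq_one {ζ : K} (hζ : IsPrimitiveRoot ζ p)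
    (h : ∀ μ : K, μ ^ p = 1 → μ ≠ 1 → (μ + 1) ^ p = 1) : ∃ m, p = 2 ^ m - 1 := by
  rcases p.eq_zero_or_pos with rfl | hp
  · exact ⟨0, rfl⟩
  have hcard := card_powSuccFixedSubfield h hζ hp
  have : Finite (powSuccFixedSubfield h) := Nat.finite_of_card_ne_zero (by omega)
  have := Fintype.ofFinite (powSuccFixedSubfield h)
  obtain ⟨m, -, hm⟩ := FiniteField.card (powSuccFixedSubfield h) 2
  rw [Nat.card_eq_fintype_card, hm] at hcard
  exact ⟨m, by omega⟩

end CharTwo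

theorem IsPrimitiveRoot.exists_isPrimitiveRoot_pow_eq {M : Type*} [CommMonoid M] {μ : M}
    {p n : ℕ} (hμ : IsPrimitiveRoot μ p) (hp : 1 < p) (hn : n.Coprime p) :
    ∃ θ, IsPrimitiveRoot θ p ∧ θ ^ n = μ := by
  obtain ⟨k, -, hk⟩ := Nat.exists_mul_mod_eq_one_of_coprime hn hp
  have hkp : k.Coprime p :=
    Nat.coprime_of_mul_modEq_one n (by rw [Nat.ModEq, mul_comm, hk, Nat.mod_eq_of_lt hp])
  refine ⟨μ ^ k, hμ.pow_of_coprime k hkp, ?_⟩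
  rw [← pow_mul, pow_eq_pow_mod _ hμ.pow_eq_one, mul_comm, hk, pow_one]

theorem add_one_pow_eq_one_of_mk_pow_eq_one {R K : Type*} [CommRing R] [Field K] [Algebra R K]
    {p n : ℕ} (hp : p.Prime) (hn : n.Coprime p)
    (H : AdjoinRoot.mk (cyclotomic p R) (X ^ n + 1) ^ p = 1) {μ : K} (hμ : μ ^ p = 1)
    (hμ1 : μ ≠ 1) : (μ + 1) ^ p = 1 := by
  have hprim : IsPrimitiveRoot μ p :=
    isPrimitiveRoot_of_mem_nthRootsFinset hp ((mem_nthRootsFinset hp.pos _).mpr hμ) hμ1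
  obtain ⟨θ, hθ, rfl⟩ := hprim.exists_isPrimitiveRoot_pow_eq hp.one_lt hn
  have hroot : (cyclotomic p R).eval₂ (algebraMap R K) θ = 0 := by
    simpa [eval₂_eq_eval_map] using hθ.isRoot_cyclotomic hp.pos
  simpa using congrArg (AdjoinRoot.lift (algebraMap R K) θ hroot) H

theorem exists_eq_two_pow_sub_one_of_mk_pow_eq_one {F : Type*} [Field F] [CharP F 2] {p n : ℕ}
    (hp : p.Prime) (hodd : Odd p) (hn : n.Coprime p)
    (H : AdjoinRoot.mk (cyclotomic p F) (X ^ n + 1) ^ p = 1) : ∃ m, p = 2 ^ m - 1 := by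
  have : NeZero p := ⟨hp.ne_zero⟩
  have : NeZero (p : F) := ⟨fun h ↦ (Nat.not_even_iff_odd.mpr hodd)
    (even_iff_two_dvd.mpr ((CharP.cast_eq_zero_iff F 2 p).mp h))⟩
  have : CharP (CyclotomicField p F) 2 :=
    charP_of_injective_algebraMap (algebraMap F _).injective 2
  exact exists_eq_two_pow_sub_one_of_add_one_pow_eq_one
    (IsCyclotomicExtension.zeta_spec p F (CyclotomicField p F))
    fun _ ↦ add_one_pow_eq_one_of_mk_pow_eq_one hp hn H

theorem mk_pow_eq_one_of_eq_two_pow_sub_one {F : Type*} [Field F] [CharP F 2] {p n m : ℕ}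
    (hp : p.Prime) (hn : n.Coprime p) (hm : p = 2 ^ m - 1) :
    AdjoinRoot.mk (cyclotomic p F) (X ^ n + 1) ^ p = 1 := by
  have : Fact p.Prime := ⟨hp⟩
  have : Nontrivial (AdjoinRoot (cyclotomic p F)) :=
    AdjoinRoot.nontrivial _ (degree_cyclotomic_pos p F hp.pos).ne'
  have : CharP (AdjoinRoot (cyclotomic p F)) 2 :=
    charP_of_injective_algebraMap (algebraMap F _).injective 2
  have hsum : ∑ j ∈ range p, AdjoinRoot.root (cyclotomic p F) ^ j = 0 := by
    have h : aeval (AdjoinRoot.root (cyclotomic p F)) (∑ i ∈ range p, X ^ i : F[X]) = 0 := by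
      rw [AdjoinRoot.aeval_eq, ← cyclotomic_prime F p, AdjoinRoot.mk_self]
    simpa using h
  rw [map_add, map_pow, AdjoinRoot.mk_X, map_one]
  exact add_one_pow_eq_one_of_geom_sum_eq_zero hsum hn hm

theorem stmt_14_general (p : ℕ) (hp : p.Prime) (hodd : Odd p) (n : ℕ)
    (hnp : Nat.Coprime n p) :
    (Ideal.Quotient.mk (Ideal.span {cyclotomic p (ZMod 2)}) (X ^ n + 1)) ^ p = 1 ↔
      ∃ m, p = 2 ^ m - 1 :=
  -- `AdjoinRoot.mk f` is by definition `Ideal.Quotient.mk (Ideal.span {f})`.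
  ⟨exists_eq_two_pow_sub_one_of_mk_pow_eq_one hp hodd hnp,
    fun ⟨_, hm⟩ ↦ mk_pow_eq_one_of_eq_two_pow_sub_one hp hnp hm⟩

theorem stmt_14 (p : ℕ) (hp : p.Prime) (hodd : Odd p) (n : ℕ) (hn : 0 < n)
    (hnp : Nat.Coprime n p) :
    (Ideal.Quotient.mk (Ideal.span {cyclotomic p (ZMod 2)}) (X ^ n + 1)) ^ p = 1 ↔
      ∃ m, p = 2 ^ m - 1 :=
  stmt_14_general p hp hodd n hnp
end

section
/- For a prime p > 3, (1 + x + x^2)^p = 1 in F_2[x]/(x^p - 1) if and only if p is a Mersenne prime. -/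
open Polynomial Finset

/-!
Write `y` for the class of `X` and `a = 1 + y + y²`. Since `3 ∤ p`, the polynomials `1 + X + X²`
and `X^p - 1` have no common root, so `a` is a unit. If `p = 2^n - 1`, Frobenius gives
`a^(p+1) = a^(2^n) = 1 + y^(2^n) + y^(2^(n+1)) = a`, hence `a^p = 1`.

Conversely, `(1 + y) a = 1 + y³` in characteristic 2, so `a^p = 1` forces
`(1 + y³)^p = (1 + y)^p`. Both sides have a unique representative of degree `< p`, and comparing
the coefficients of `y^(3·2^j)` gives `C(p, 2^j) ≡ C(p, 3·2^j) (mod 2)`. By Lucas these are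
`q` and `C(q, 3)` modulo 2, where `q = ⌊p / 2^j⌋`, and they differ whenever `q ≡ 1 (mod 4)`;
such a `j` with `q > 1` exists unless `p + 1` is a power of 2.
-/

theorem Nat.choose_mul_prime_pow_modEq {p : ℕ} [Fact p.Prime] (n k j : ℕ) :
    n.choose (k * p ^ j) ≡ (n / p ^ j).choose k [MOD p] := by
  induction j generalizing n with
  | zero => simpa using Nat.ModEq.refl _
  | succ j ih =>
    have hp : 0 < p := (Fact.out : p.Prime).pos
    calc n.choose (k * p ^ (j + 1))
        ≡ (n % p).choose (k * p ^ (j + 1) % p) * (n / p).choose (k * p ^ (j + 1) / p) [MOD p] :=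
          Choose.choose_modEq_choose_mod_mul_choose_div_nat
      _ = (n / p).choose (k * p ^ j) := by
          rw [pow_succ, ← mul_assoc, Nat.mul_mod_left, Nat.mul_div_cancel _ hp,
            Nat.choose_zero_right, one_mul]
      _ ≡ (n / p / p ^ j).choose k [MOD p] := ih _
      _ = (n / p ^ (j + 1)).choose k := by rw [Nat.div_div_eq_div_mul, pow_succ']

theorem exists_div_two_pow_mod_four_eq_one {n : ℕ} (hn : Odd n) (hM : ∀ m, n ≠ 2 ^ m - 1) :
    ∃ j, n / 2 ^ j % 4 = 1 ∧ n / 2 ^ j ≠ 1 := by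
  induction n using Nat.strong_induction_on with
  | _ n ih =>
  obtain ⟨r, rfl⟩ := hn
  rcases Nat.even_or_odd r with ⟨s, rfl⟩ | hr
  · refine ⟨0, by omega, fun h => hM 1 (by rw [pow_zero, Nat.div_one] at h; omega)⟩
  · have hr_ne (m : ℕ) (hm : r = 2 ^ m - 1) : False := by
      have := Nat.one_le_two_pow (n := m)
      exact hM (m + 1) (by rw [pow_succ]; omega)
    obtain ⟨j, hj⟩ := ih r (by omega) hr hr_ne
    refine ⟨j + 1, ?_⟩
    rwa [pow_succ', ← Nat.div_div_eq_div_mul, show (2 * r + 1) / 2 = r by omega]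

theorem choose_two_pow_ne_choose_three_mul_two_pow {n j : ℕ} (h : n / 2 ^ j % 4 = 1) :
    (n.choose (2 ^ j) : ZMod 2) ≠ n.choose (3 * 2 ^ j) := by
  have hone := Nat.choose_mul_prime_pow_modEq (p := 2) n 1 j
  have hthree := Nat.choose_mul_prime_pow_modEq (p := 2) n 3 j
  have hlucas := Choose.choose_modEq_choose_mod_mul_choose_div_nat (n := n / 2 ^ j) (k := 3) (p := 2)
  rw [one_mul] at hone
  rw [← ZMod.natCast_eq_natCast_iff] at hone hthree hlucas
  rw [hone, hthree, hlucas, Ne, ZMod.natCast_eq_natCast_iff']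
  have ho : n / 2 ^ j % 2 = 1 := by omega
  simp only [Nat.choose_one_right, Nat.reduceMod, Nat.reduceDiv, ho, one_mul]
  omega

section CyclicQuotient

variable {K : Type*} [CommRing K] {p : ℕ}

theorem mk_X_pow_mod (k : ℕ) :
    AdjoinRoot.mk (X ^ p - 1 : K[X]) (X ^ k) = AdjoinRoot.mk (X ^ p - 1) (X ^ (k % p)) := by
  have hXp : AdjoinRoot.mk (X ^ p - 1 : K[X]) (X ^ p) = 1 := by
    rw [← sub_eq_zero, ← map_one (AdjoinRoot.mk _), ← map_sub, AdjoinRoot.mk_self]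
  conv_lhs => rw [← Nat.div_add_mod k p, pow_add, pow_mul, map_mul, map_pow, hXp, one_pow, one_mul]

variable (K) in
/-- `(1 + X ^ m) ^ p` with exponents reduced modulo `p`. -/
noncomputable def foldedBinomial (p m : ℕ) : K[X] :=
  ∑ k ∈ range (p + 1), C (p.choose k : K) * X ^ (m * k % p)

theorem mk_one_add_X_pow_pow (m : ℕ) :
    AdjoinRoot.mk (X ^ p - 1 : K[X]) ((1 + X ^ m) ^ p) =
      AdjoinRoot.mk (X ^ p - 1) (foldedBinomial K p m) := by
  rw [foldedBinomial, add_comm, add_pow, map_sum, map_sum]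
  refine sum_congr rfl fun k _ => ?_
  rw [one_pow, mul_one, ← pow_mul, C_eq_natCast, mul_comm, map_mul, map_mul, mk_X_pow_mod]

theorem natDegree_foldedBinomial_lt (hp : 0 < p) (m : ℕ) : (foldedBinomial K p m).natDegree < p :=
  (natDegree_sum_le_of_forall_le _ _ fun _ _ =>
    (natDegree_C_mul_X_pow_le _ _).trans (Nat.le_pred_of_lt (Nat.mod_lt _ hp))).trans_lt
    (Nat.pred_lt hp.ne')

theorem coeff_foldedBinomial (m e : ℕ) :
    (foldedBinomial K p m).coeff e = ∑ k ∈ range (p + 1) with m * k % p = e, (p.choose k : K) := by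
  simp only [foldedBinomial, finsetSum_coeff, coeff_C_mul_X_pow, sum_filter, eq_comm]

theorem foldedBinomial_eq_of_mk_eq [Nontrivial K] (hp : 0 < p) {m m' : ℕ}
    (h : AdjoinRoot.mk (X ^ p - 1 : K[X]) ((1 + X ^ m) ^ p) =
      AdjoinRoot.mk (X ^ p - 1) ((1 + X ^ m') ^ p)) :
    foldedBinomial K p m = foldedBinomial K p m' := by
  rw [mk_one_add_X_pow_pow, mk_one_add_X_pow_pow, AdjoinRoot.mk_eq_mk] at h
  have hmonic : (X ^ p - 1 : K[X]).Monic := by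
    simpa only [map_one] using monic_X_pow_sub_C (1 : K) hp.ne'
  have hdeg : (X ^ p - 1 : K[X]).natDegree = p := by
    simpa only [map_one] using natDegree_X_pow_sub_C (n := p) (r := (1 : K))
  by_contra hne
  refine hmonic.not_dvd_of_natDegree_lt (sub_ne_zero.mpr hne) ?_ h
  rw [hdeg]
  exact (natDegree_sub_le _ _).trans_lt
    (max_lt (natDegree_foldedBinomial_lt hp m) (natDegree_foldedBinomial_lt hp m'))

theorem filter_range_mul_mod_eq {m k₀ : ℕ} (hm : m.Coprime p) (hk₀ : 0 < k₀) (hk₀p : k₀ < p) :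
    {k ∈ range (p + 1) | m * k % p = m * k₀ % p} = {k₀} := by
  ext k
  simp only [mem_filter, mem_range, mem_singleton]
  refine ⟨fun ⟨hk, hmk⟩ => ?_, fun hk => ⟨by omega, by rw [hk]⟩⟩
  have hkk₀ : k % p = k₀ := by
    rw [← Nat.mod_eq_of_lt hk₀p]
    exact Nat.ModEq.cancel_left_of_coprime (hm.symm.gcd_eq_one) hmk
  rcases Nat.lt_or_ge k p with hkp | hkp
  · rwa [Nat.mod_eq_of_lt hkp] at hkk₀
  · rw [show k = p by omega, Nat.mod_self] at hkk₀
    omega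

theorem choose_eq_of_mk_one_add_X_pow_pow_eq [Nontrivial K] {m m' k k' : ℕ}
    (hm : m.Coprime p) (hm' : m'.Coprime p) (hk : 0 < k) (hkp : k < p) (hk' : 0 < k')
    (hk'p : k' < p) (hkk' : m * k % p = m' * k' % p)
    (h : AdjoinRoot.mk (X ^ p - 1 : K[X]) ((1 + X ^ m) ^ p) =
      AdjoinRoot.mk (X ^ p - 1) ((1 + X ^ m') ^ p)) :
    (p.choose k : K) = p.choose k' := by
  have := congrArg (coeff · (m * k % p)) (foldedBinomial_eq_of_mk_eq (by omega) h)
  simp only [coeff_foldedBinomial] at this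
  rwa [filter_range_mul_mod_eq hm hk hkp, hkk', filter_range_mul_mod_eq hm' hk' hk'p,
    sum_singleton, sum_singleton] at this

end CyclicQuotient

theorem one_add_mul_one_add_add_sq {R : Type*} [CommRing R] [CharP R 2] (x : R) :
    (1 + x) * (1 + x + x ^ 2) = 1 + x ^ 3 := by
  linear_combination (x + x ^ 2) * CharTwo.two_eq_zero (R := R)

theorem isCoprime_one_add_X_add_X_sq {K : Type*} [Field K] (h3 : (3 : K) ≠ 0) {p : ℕ}
    (hp : Nat.Coprime 3 p) : IsCoprime (1 + X + X ^ 2 : K[X]) (X ^ p - 1) := by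
  rw [isCoprime_iff_aeval_ne_zero_of_isAlgClosed K (AlgebraicClosure K)]
  intro ω
  by_contra! hω
  simp only [map_add, map_one, map_pow, aeval_X, map_sub] at hω
  obtain ⟨hω3, hωp⟩ := hω
  have hω1 : ω = 1 := by
    have hcube : ω ^ 3 = 1 := by linear_combination (ω - 1) * hω3
    simpa [hp] using pow_gcd_eq_one.mpr ⟨hcube, sub_eq_zero.mp hωp⟩
  apply h3
  apply (algebraMap K (AlgebraicClosure K)).injective
  rw [hω1] at hω3
  simpa [map_ofNat] using (by linear_combination hω3 : (3 : AlgebraicClosure K) = 0)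

theorem AdjoinRoot.isUnit_mk_of_isCoprime {R : Type*} [CommRing R] {f g : R[X]}
    (h : IsCoprime g f) : IsUnit (AdjoinRoot.mk f g) := by
  obtain ⟨u, v, huv⟩ := h
  refine .of_mul_eq_one_right (AdjoinRoot.mk f u) ?_
  simpa [AdjoinRoot.mk_self] using congrArg (AdjoinRoot.mk f) huv

theorem pow_eq_one_of_eq_two_pow_sub_one {p n : ℕ} (h3 : Nat.Coprime 3 p) (hn : p = 2 ^ n - 1) :
    AdjoinRoot.mk (X ^ p - 1 : (ZMod 2)[X]) (1 + X + X ^ 2) ^ p = 1 := by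
  set a := AdjoinRoot.mk (X ^ p - 1 : (ZMod 2)[X]) (1 + X + X ^ 2)
  have hunit : IsUnit a :=
    AdjoinRoot.isUnit_mk_of_isCoprime (isCoprime_one_add_X_add_X_sq (by decide) h3)
  have h2n : 2 ^ n = p + 1 := by have := Nat.one_le_two_pow (n := n); omega
  have hXp : AdjoinRoot.mk (X ^ p - 1 : (ZMod 2)[X]) (X ^ (p + 1)) = AdjoinRoot.mk _ X := by
    rw [mk_X_pow_mod, Nat.add_mod_left, ← mk_X_pow_mod, pow_one]
  have hfrob : (1 + X + X ^ 2 : (ZMod 2)[X]) ^ 2 ^ n = 1 + X ^ 2 ^ n + (X ^ 2 ^ n) ^ 2 := by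
    rw [add_pow_char_pow, add_pow_char_pow, one_pow, ← pow_mul, ← pow_mul, mul_comm]
  have hfix : a ^ (p + 1) = a := by
    rw [← h2n, ← map_pow, hfrob, h2n, map_add, map_add, map_pow _ _ 2, hXp, ← map_pow, ← map_add,
      ← map_add]
  exact hunit.mul_left_inj.mp (by rw [← pow_succ, hfix, one_mul])

theorem exists_eq_two_pow_sub_one_of_pow_eq_one {p : ℕ} (hodd : Odd p) (h3 : Nat.Coprime 3 p)
    (h : AdjoinRoot.mk (X ^ p - 1 : (ZMod 2)[X]) (1 + X + X ^ 2) ^ p = 1) :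
    ∃ n, p = 2 ^ n - 1 := by
  by_contra! hM
  obtain ⟨j, hj4, hj1⟩ := exists_div_two_pow_mod_four_eq_one hodd hM
  have hjp : 3 * 2 ^ j < p := by
    have h5 : 5 ≤ p / 2 ^ j := by generalize p / 2 ^ j = q at hj4 hj1; omega
    have := Nat.div_mul_le_self p (2 ^ j)
    have := Nat.one_le_two_pow (n := j)
    nlinarith
  have hmk : AdjoinRoot.mk (X ^ p - 1 : (ZMod 2)[X]) ((1 + X ^ 3) ^ p) =
      AdjoinRoot.mk _ ((1 + X ^ 1) ^ p) := by
    rw [← one_add_mul_one_add_add_sq, mul_pow, map_mul, map_pow _ (1 + X + X ^ 2), h, mul_one,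
      pow_one]
  exact choose_two_pow_ne_choose_three_mul_two_pow hj4 <|
    choose_eq_of_mk_one_add_X_pow_pow_eq h3 (Nat.coprime_one_left p) (by positivity)
      (by omega) (by positivity) hjp (by rw [one_mul]) hmk

theorem stmt_16 (p : ℕ) (hp : p.Prime) (h3 : 3 < p) :
    (Ideal.Quotient.mk (Ideal.span {(X : Polynomial (ZMod 2)) ^ p - 1})
      (1 + X + X ^ 2)) ^ p = 1 ↔ ∃ n, p = 2 ^ n - 1 := by
  have h3p : Nat.Coprime 3 p := (Nat.coprime_primes Nat.prime_three hp).mpr (by omega)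
  exact ⟨exists_eq_two_pow_sub_one_of_pow_eq_one (hp.odd_of_ne_two (by omega)) h3p,
    fun ⟨n, hn⟩ => pow_eq_one_of_eq_two_pow_sub_one h3p hn⟩
end

section
/- Let p > 3 be a prime such that C(p, j) ≡ C(p, 3j mod p) (mod 2) for all 1 ≤ j ≤ p - 1. Then p is a Mersenne prime, i.e., p + 1 is a power of 2. -/
/-! By Lucas' theorem, `C(n, k)` is odd exactly when every binary digit of `k` is a digit of `n`.
If the odd number `p` is not of the form `2 ^ a - 1`, write `p + 1 = 2 ^ (m + 1) * b` with `b > 1`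
odd; then `p` has a `1` in position `m`, a `0` in position `m + 1` and `3 * 2 ^ m < p`.
For `j = 2 ^ m` the coefficient `C(p, j)` is odd, while `3 * j = 2 ^ m + 2 ^ (m + 1)` uses the
missing digit `m + 1`, so `C(p, 3 * j)` is even. -/

namespace Nat

theorem odd_choose_iff_forall_testBit (n k : ℕ) :
    Odd (n.choose k) ↔ ∀ i, k.testBit i = true → n.testBit i = true := by
  induction k using Nat.strong_induction_on generalizing n with
  | _ k ih =>
  rcases k.eq_zero_or_pos with rfl | hk
  · simp
  have lucas : Odd (n.choose k) ↔
      Odd ((n % 2).choose (k % 2)) ∧ Odd ((n / 2).choose (k / 2)) := by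
    rw [← Nat.odd_mul, Nat.odd_iff, Nat.odd_iff,
      Choose.choose_modEq_choose_mod_mul_choose_div_nat (p := 2)]
  have lowest_digit : Odd ((n % 2).choose (k % 2)) ↔
      (k.testBit 0 = true → n.testBit 0 = true) := by
    rw [Nat.testBit_zero, Nat.testBit_zero]
    have := n.mod_lt two_pos
    have := k.mod_lt two_pos
    interval_cases n % 2 <;> interval_cases k % 2 <;> decide
  rw [lucas, lowest_digit, ih (k / 2) (Nat.div_lt_self hk one_lt_two)]
  simp only [← Nat.testBit_succ]
  constructor
  · rintro ⟨h0, hs⟩ (_ | i)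
    exacts [h0, hs i]
  · intro h
    exact ⟨h 0, fun i => h (i + 1)⟩

theorem odd_choose_two_pow_iff (n m : ℕ) : Odd (n.choose (2 ^ m)) ↔ n.testBit m = true := by
  simp [odd_choose_iff_forall_testBit, Nat.testBit_two_pow]

theorem even_choose_three_mul_two_pow {n m : ℕ} (h : n.testBit (m + 1) = false) :
    Even (n.choose (3 * 2 ^ m)) := by
  rw [← Nat.not_odd_iff_even, odd_choose_iff_forall_testBit]
  intro hbits
  have : (3 * 2 ^ m).testBit (m + 1) = true := by
    simp [Nat.testBit_mul_two_pow, show testBit 3 1 = true by decide]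
  simp [hbits _ this] at h

theorem exists_testBit_true_succ_false_of_odd_of_succ_ne_two_pow {n : ℕ} (hn : Odd n)
    (h : ∀ a, n + 1 ≠ 2 ^ a) :
    ∃ m, n.testBit m = true ∧ n.testBit (m + 1) = false ∧ 3 * 2 ^ m < n := by
  obtain ⟨a, b, hb, hab⟩ := Nat.exists_eq_two_pow_mul_odd n.succ_ne_zero
  obtain ⟨c, rfl⟩ := hb
  have hc : c ≠ 0 := by rintro rfl; exact h a (by simpa using hab)
  obtain ⟨m, rfl⟩ : ∃ m, a = m + 1 := by
    refine Nat.exists_eq_add_one.mpr (Nat.pos_of_ne_zero ?_)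
    rintro rfl
    have := Nat.odd_iff.mp hn
    omega
  have hn_eq : n = 2 ^ (m + 1) * (2 * c) + (2 ^ (m + 1) - 1) := by
    have : 1 ≤ 2 ^ (m + 1) := Nat.one_le_two_pow
    zify [this] at hab ⊢
    linear_combination hab
  have hlow : 2 ^ (m + 1) - 1 < 2 ^ (m + 1) := Nat.sub_lt (Nat.two_pow_pos _) one_pos
  refine ⟨m, ?_, ?_, ?_⟩
  · simp [hn_eq, Nat.testBit_two_pow_mul_add _ hlow]
  · simp [hn_eq, Nat.testBit_two_pow_mul_add _ hlow]
  · calc 3 * 2 ^ m < 2 ^ (m + 1) * 2 := by rw [pow_succ]; omega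
      _ ≤ 2 ^ (m + 1) * (2 * c) := by gcongr; omega
      _ ≤ n := hn_eq ▸ Nat.le_add_right _ _

end Nat

theorem stmt_19 (p : ℕ) (hp : p.Prime) (h3 : 3 < p)
    (h : ∀ j, 1 ≤ j → j ≤ p - 1 →
      Nat.choose p j ≡ Nat.choose p (3 * j % p) [MOD 2]) :
    ∃ n, p + 1 = 2 ^ n := by
  by_contra! hne
  obtain ⟨m, hm, hm_succ, hlt⟩ :=
    Nat.exists_testBit_true_succ_false_of_odd_of_succ_ne_two_pow (hp.odd_of_ne_two (by omega)) hne
  have hcong : p.choose (2 ^ m) % 2 = p.choose (3 * 2 ^ m) % 2 := by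
    have := h (2 ^ m) Nat.one_le_two_pow (by omega)
    rwa [Nat.mod_eq_of_lt hlt] at this
  have hodd := Nat.odd_iff.mp ((Nat.odd_choose_two_pow_iff p m).mpr hm)
  have heven := Nat.even_iff.mp (Nat.even_choose_three_mul_two_pow hm_succ)
  omega
end
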